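/- arXiv:2009.12649 — 5 statements merged into one kernel-verified Lean document; each statement's English description precedes it below -/
import Mathlib

section
/- Fenchel duality for the monotone maximization: if f is concave and differentiable on the cone C = {y ∈ ℝ^m : 0 < y_1 ≤ y_2 ≤ ... ≤ y_m}, then ŷ ∈ C maximizes f over C if and only if Σ_{j=i}^m ∂f/∂y_j(ŷ) ≤ 0 for all i = 1,...,m and Σ_{i=1}^m ŷ_i · ∂f/∂y_i(ŷ) = 0. -/
/-!
At a maximizer `ŷ` of a concave differentiable `f` on a convex cone `C`, the derivative is
nonpositive along every `y ∈ C` (as `ŷ + t y ∈ C`) and along `-ŷ` (as `(1 - t) ŷ ∈ C`), so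
`∇f(ŷ) ≤ 0` on `C` and `∇f(ŷ) ŷ = 0`; conversely these two facts and the gradient inequality
`f y ≤ f ŷ + ∇f(ŷ) (y - ŷ)` give maximality. For the ordered cone, a linear functional is
nonpositive on `C` iff it is nonpositive on the rays `e_i + ⋯ + e_m` spanning its closure, by
Abel summation: `y = y_1 (e_1 + ⋯ + e_m) + ∑_{i ≥ 2} (y_i - y_{i-1}) (e_i + ⋯ + e_m)`.
-/

open Finset Filter Topology

section FirstOrder

variable {E : Type*} [NormedAddCommGroup E] [NormedSpace ℝ E] {s : Set E} {f : E → ℝ}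
  {f' : E →L[ℝ] ℝ} {a y : E}

theorem ConcaveOn.le_add_fderiv (hf : ConcaveOn ℝ s f) (ha : a ∈ s) (hy : y ∈ s)
    (hfa : HasFDerivAt f f' a) : f y ≤ f a + f' (y - a) := by
  set L := AffineMap.lineMap (k := ℝ) a y
  have hL : HasDerivAt (f ∘ L) (f' (y - a)) 0 := by
    have hL0 : L 0 = a := AffineMap.lineMap_apply_zero a y
    exact (hL0 ▸ hfa).comp_hasDerivAt 0 AffineMap.hasDerivAt_lineMap
  have hslope := (hf.comp_affineMap L).slope_le_of_hasDerivAt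
    (by simpa [L] using ha) (by simpa [L] using hy) one_pos hL
  simp only [slope_def_field, Function.comp_apply, L, AffineMap.lineMap_apply_zero,
    AffineMap.lineMap_apply_one, sub_zero, div_one] at hslope
  linarith

theorem IsMaxOn.fderiv_nonpos_of_add_smul_mem (h : IsMaxOn f s a) (hfa : HasFDerivAt f f' a)
    {d : E} (hd : ∀ t : ℝ, 0 < t → t < 1 → a + t • d ∈ s) : f' d ≤ 0 := by
  refine h.localize.hasFDerivWithinAt_nonpos hfa.hasFDerivWithinAt
    (mem_posTangentConeAt_of_frequently_mem (Eventually.frequently ?_))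
  filter_upwards [Ioo_mem_nhdsGT one_pos] with t ht using hd t ht.1 ht.2

theorem ConvexCone.isMaxOn_iff_of_concaveOn (K : ConvexCone ℝ E) (hf : ConcaveOn ℝ K f)
    (ha : a ∈ K) (hfa : HasFDerivAt f f' a) :
    IsMaxOn f K a ↔ (∀ y ∈ K, f' y ≤ 0) ∧ f' a = 0 := by
  constructor
  · intro hmax
    have hdir : ∀ y ∈ K, f' y ≤ 0 := fun y hy ↦
      hmax.fderiv_nonpos_of_add_smul_mem hfa fun t ht _ ↦ K.add_mem ha (K.smul_mem ht hy)
    have hneg : f' (-a) ≤ 0 := hmax.fderiv_nonpos_of_add_smul_mem hfa fun t _ ht ↦ by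
      rw [show a + t • -a = (1 - t) • a by module]
      exact K.smul_mem (sub_pos.2 ht) ha
    rw [map_neg] at hneg
    exact ⟨hdir, le_antisymm (hdir a ha) (neg_nonpos.1 hneg)⟩
  · rintro ⟨hdir, hfa_zero⟩
    refine isMaxOn_iff.2 fun y hy ↦ ?_
    calc f y ≤ f a + f' (y - a) := hf.le_add_fderiv ha hy hfa
      _ ≤ f a := by rw [map_sub, hfa_zero, sub_zero]; linarith [hdir y hy]

end FirstOrder

theorem ContinuousLinearMap.apply_eq_sum_mul_single {ι : Type*} [Fintype ι]
    [DecidableEq ι] (g : (ι → ℝ) →L[ℝ] ℝ) (x : ι → ℝ) : g x = ∑ i, x i * g (Pi.single i 1) := by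
  conv_lhs => rw [← Finset.univ_sum_single x, map_sum]
  refine sum_congr rfl fun i _ ↦ ?_
  rw [← smul_eq_mul, ← map_smul, ← Pi.single_smul, smul_eq_mul, mul_one]

theorem Fin.sum_mul_nonpos_of_sum_Ici_nonpos : ∀ {n : ℕ} {y G : Fin n → ℝ},
    Monotone y → 0 ≤ y → (∀ i, ∑ j ∈ Ici i, G j ≤ 0) → ∑ k, y k * G k ≤ 0
  | 0, _, _, _, _, _ => by simp
  | n + 1, y, G, hy, hy₀, hG => by
    have htail : ∑ k : Fin n, (y k.succ - y 0) * G k.succ ≤ 0 :=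
      sum_mul_nonpos_of_sum_Ici_nonpos (fun _ _ hkl ↦ by gcongr; exact hy (by simpa))
        (fun k ↦ sub_nonneg.2 (hy (Fin.zero_le _)))
        (fun i ↦ by simpa [← Fin.map_succEmb_Ici, Finset.sum_map] using hG i.succ)
    calc ∑ k, y k * G k = y 0 * ∑ k, G k + ∑ k : Fin n, (y k.succ - y 0) * G k.succ := by
          simp only [Fin.sum_univ_succ, mul_add, Finset.mul_sum, sub_mul, Finset.sum_sub_distrib]
          ring
      _ ≤ 0 :=
        add_nonpos (mul_nonpos_of_nonneg_of_nonpos (hy₀ 0) (by simpa using hG 0)) htail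

def orderedCone (m : ℕ) (hm : 0 < m) : ConvexCone ℝ (Fin m → ℝ) where
  carrier := {y | 0 < y ⟨0, hm⟩ ∧ Monotone y}
  smul_mem' _ hc _ hy := ⟨mul_pos hc hy.1, hy.2.const_smul hc.le⟩
  add_mem' _ hx _ hy := ⟨add_pos hx.1 hy.1, hx.2.add hy.2⟩

section OrderedCone

variable {m : ℕ} (hm : 0 < m)

theorem sum_Ici_single_mem_closure_orderedCone (i : Fin m) :
    ∑ j ∈ Ici i, Pi.single j (1 : ℝ) ∈ closure (orderedCone m hm : Set (Fin m → ℝ)) := by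
  set e := ∑ j ∈ Ici i, Pi.single j (1 : ℝ)
  have he : e = fun k ↦ if i ≤ k then 1 else 0 := by
    ext k
    simp [e, Finset.sum_apply, Pi.single_apply]
  have he_mono : Monotone e := by
    intro k l hkl
    simp only [he]
    split_ifs with hk hl
    exacts [le_rfl, absurd (hk.trans hkl) hl, zero_le_one, le_rfl]
  have he_nonneg : 0 ≤ e := by
    intro k
    simp only [he]
    split_ifs <;> norm_num
  refine mem_closure_of_tendsto (f := fun t : ℝ ↦ e + t • 1) (b := 𝓝[>] 0) ?_ ?_
  · have hcont : Continuous fun t : ℝ ↦ e + t • (1 : Fin m → ℝ) := by fun_prop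
    simpa using (hcont.tendsto 0).mono_left nhdsWithin_le_nhds
  · filter_upwards [self_mem_nhdsWithin] with t (ht : 0 < t)
    refine ⟨?_, he_mono.add (monotone_const.const_smul ht.le)⟩
    simpa using add_pos_of_nonneg_of_pos (he_nonneg ⟨0, hm⟩) ht

theorem forall_orderedCone_nonpos_iff (g : (Fin m → ℝ) →L[ℝ] ℝ) :
    (∀ y ∈ orderedCone m hm, g y ≤ 0) ↔ ∀ i, ∑ j ∈ Ici i, g (Pi.single j 1) ≤ 0 := by
  constructor
  · intro hK i
    have hclosure : closure (orderedCone m hm : Set (Fin m → ℝ)) ⊆ {y | g y ≤ 0} :=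
      closure_minimal hK (isClosed_le g.continuous continuous_const)
    simpa [map_sum] using hclosure (sum_Ici_single_mem_closure_orderedCone hm i)
  · rintro hG y ⟨hy0, hy⟩
    rw [g.apply_eq_sum_mul_single]
    exact Fin.sum_mul_nonpos_of_sum_Ici_nonpos hy
      (fun k ↦ hy0.le.trans (hy (Nat.zero_le k))) hG

end OrderedCone

/-- Fenchel characterization of the maximizer of a concave differentiable
function over the ordered cone `C = {y : 0 < y_1 ≤ y_2 ≤ ... ≤ y_m}`. -/
theorem fenchel_conditions_iff_maximizer
    (m : ℕ) (hm : 0 < m)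
    (C : Set (Fin m → ℝ))
    (hC : C = {y : Fin m → ℝ | 0 < y ⟨0, hm⟩ ∧ Monotone y})
    (f : (Fin m → ℝ) → ℝ)
    (hconc : ConcaveOn ℝ C f)
    (hdiff : Differentiable ℝ f)
    (yhat : Fin m → ℝ) (hyhat : yhat ∈ C) :
    (∀ y ∈ C, f y ≤ f yhat) ↔
      ((∀ i : Fin m, ∑ j ∈ Finset.Ici i, fderiv ℝ f yhat (Pi.single j 1) ≤ 0) ∧
        ∑ i, yhat i * fderiv ℝ f yhat (Pi.single i 1) = 0) := by
  subst hC
  change (∀ y ∈ (orderedCone m hm : Set (Fin m → ℝ)), f y ≤ f yhat) ↔ _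
  rw [← isMaxOn_iff,
    (orderedCone m hm).isMaxOn_iff_of_concaveOn hconc hyhat (hdiff yhat).hasFDerivAt,
    forall_orderedCone_nonpos_iff hm, ← ContinuousLinearMap.apply_eq_sum_mul_single]
end

section
/- Zero-mean property of the score: let G be a distribution function with G(s) = 0 for s ≤ 0 and G(s) = 1 for s ≥ M₁, let φ : ℝ → ℝ satisfy φ(s) = 0 for s ≥ M₁ and φ(0) = 0, and let M ≥ M₁. If E is Uniform[0,M], V given E is Uniform[0,E], W has distribution G independent of V, S = V + W, and Δ = 1_{S≤E}, then the score θ(E,S,Δ) = Δ·φ(S)/G(S) + (1−Δ)·(φ(S)−φ(S−E))/(G(S)−G(S−E)) (with 0/0 := 0) has expectation E[θ(E,S,Δ)] = 0. -/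
/-!
Both branches of `θ` agree with `(φ s - φ (s - e)) / (G s - G (s - e))`, since `φ` and `G`
vanish on `(-∞, 0]`. Given `E = e`, the law of `V + W` is the convolution of `Uniform(0, e)`
with `G`, whose density is `s ↦ (G s - G (s - e)) / e`. Multiplied by this density the score becomes
`(φ s - φ (s - e)) / e`, where the Lipschitz bound `|Δφ| ≤ C |ΔG|` makes the convention
`0 / 0 = 0` harmless. Its Lebesgue integral vanishes by translation invariance.
-/

open MeasureTheory Set
open scoped ENNReal

noncomputable def score (φ G : ℝ → ℝ) (e s : ℝ) : ℝ := (φ s - φ (s - e)) / (G s - G (s - e))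

lemma abs_div_le_abs_of_abs_le_mul_abs {x y C : ℝ} (h : |x| ≤ C * |y|) : |x / y| ≤ |C| := by
  rcases eq_or_ne y 0 with rfl | hy
  · simp
  · rw [abs_div, div_le_iff₀ (abs_pos.mpr hy)]
    exact h.trans (mul_le_mul_of_nonneg_right (le_abs_self C) (abs_nonneg y))

lemma div_mul_cancel_of_abs_le_mul_abs {x y C : ℝ} (h : |x| ≤ C * |y|) : x / y * y = x := by
  rcases eq_or_ne y 0 with rfl | hy
  · simpa [eq_comm] using h
  · exact div_mul_cancel₀ x hy

lemma measureReal_Ioc_eq_sub_of_cdf {μ : Measure ℝ} [IsFiniteMeasure μ] {G : ℝ → ℝ}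
    (hμG : ∀ s, μ (Iic s) = ENNReal.ofReal (G s)) (hG : ∀ s, 0 ≤ G s) {a b : ℝ} (hab : a ≤ b) :
    μ.real (Ioc a b) = G b - G a := by
  rw [← Iic_sdiff_Iic, measureReal_sdiff (Iic_subset_Iic.2 hab) measurableSet_Iic, measureReal_def,
    measureReal_def, hμG, hμG, ENNReal.toReal_ofReal (hG b), ENNReal.toReal_ofReal (hG a)]

theorem setIntegral_integral_add_eq_integral_mul_measureReal (μ : Measure ℝ) [IsFiniteMeasure μ]
    {f : ℝ → ℝ} (hf : Measurable f) {C : ℝ} (hfC : ∀ s, |f s| ≤ C)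
    {A : Set ℝ} (hA : MeasurableSet A) (hAfin : volume A ≠ ∞) :
    ∫ v in A, ∫ w, f (v + w) ∂μ = ∫ s, f s * μ.real {w | s - w ∈ A} := by
  set g : ℝ × ℝ → ℝ := (univ ×ˢ A).indicator fun p => f (p.2 + p.1)
  set k : ℝ × ℝ → ℝ := fun p => A.indicator (fun _ => f p.2) (p.2 - p.1)
  have hshear : (fun p : ℝ × ℝ => k (p.1, p.1 + p.2)) = g := by
    ext p
    by_cases hp : p.2 ∈ A <;> simp [k, g, hp, add_comm]
  -- The substitution `s = v + w` is the shear `(w, v) ↦ (w, w + v)`, preserving `μ ⊗ volume`.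
  have hshear_mp := measurePreserving_prod_add μ (volume : Measure ℝ)
  have hshear_emb : MeasurableEmbedding fun p : ℝ × ℝ => (p.1, p.1 + p.2) :=
    (MeasurableEquiv.shearAddRight ℝ).measurableEmbedding
  have hg : Integrable g (μ.prod volume) := by
    refine (integrable_indicator_iff (MeasurableSet.univ.prod hA)).2
      (Measure.integrableOn_of_bounded ?_
        (hf.comp (measurable_snd.add measurable_fst)).aestronglyMeasurable
        (M := C) (ae_of_all _ fun p => hfC _))
    rw [Measure.prod_prod]
    exact ENNReal.mul_ne_top (measure_ne_top μ univ) hAfin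
  have hk : Integrable k (μ.prod volume) := by
    rwa [← hshear_mp.integrable_comp_emb hshear_emb, Function.comp_def, hshear]
  calc ∫ v in A, ∫ w, f (v + w) ∂μ = ∫ v, ∫ w, g (w, v) ∂μ := by
        rw [← integral_indicator hA]
        congr 1 with v
        by_cases hv : v ∈ A <;> simp [g, hv, add_comm]
    _ = ∫ p, k p ∂(μ.prod volume) := by
        rw [← integral_prod_symm g hg, ← hshear, hshear_mp.integral_comp hshear_emb k]
    _ = ∫ s, f s * μ.real {w | s - w ∈ A} := by
        rw [integral_prod_symm k hk]
        congr 1 with s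
        rw [mul_comm, ← smul_eq_mul,
          ← integral_indicator_const (s := {w | s - w ∈ A}) _
            ((measurable_const.sub measurable_id) hA)]
        rfl

section score

variable {φ G : ℝ → ℝ} {C : ℝ}

lemma abs_score_le (hφG : ∀ s t, |φ s - φ t| ≤ C * |G s - G t|) (e s : ℝ) :
    |score φ G e s| ≤ |C| :=
  abs_div_le_abs_of_abs_le_mul_abs (hφG s (s - e))

lemma score_mul_sub (hφG : ∀ s t, |φ s - φ t| ≤ C * |G s - G t|) (e s : ℝ) :
    score φ G e s * (G s - G (s - e)) = φ s - φ (s - e) :=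
  div_mul_cancel_of_abs_le_mul_abs (hφG s (s - e))

lemma measurable_score (hφ : Measurable φ) (hG : Measurable G) :
    Measurable fun p : ℝ × ℝ => score φ G p.1 p.2 := by
  unfold score
  fun_prop

lemma ite_eq_score (hG : ∀ s ≤ 0, G s = 0) (hφ : ∀ s ≤ 0, φ s = 0) (e s : ℝ) :
    (if s ≤ e then φ s / G s else score φ G e s) = score φ G e s := by
  split_ifs with h
  · simp [score, hG (s - e) (by linarith), hφ (s - e) (by linarith)]
  · rfl

lemma integral_score_mul_sub_eq_zero (hφ : Integrable φ)
    (hφG : ∀ s t, |φ s - φ t| ≤ C * |G s - G t|) (e : ℝ) :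
    ∫ s, score φ G e s * (G s - G (s - e)) = 0 := by
  simp_rw [score_mul_sub hφG]
  rw [integral_sub hφ (hφ.comp_sub_right e), integral_sub_right_eq_self, sub_self]

lemma setIntegral_Ico_integral_score_add_eq_zero (μ : Measure ℝ) [IsFiniteMeasure μ]
    (hμG : ∀ s, μ (Iic s) = ENNReal.ofReal (G s)) (hG : Measurable G) (hG_nonneg : ∀ s, 0 ≤ G s)
    (hφ : Measurable φ) (hφ_int : Integrable φ) (hφG : ∀ s t, |φ s - φ t| ≤ C * |G s - G t|)
    {e : ℝ} (he : 0 ≤ e) :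
    ∫ v in Ico 0 e, ∫ w, score φ G e (v + w) ∂μ = 0 := by
  have hslice : ∀ s, {w | s - w ∈ Ico 0 e} = Ioc (s - e) s := fun s => by
    ext w
    simp only [mem_Ico, mem_Ioc]
    constructor <;> intro h <;> constructor <;> linarith [h.1, h.2]
  rw [setIntegral_integral_add_eq_integral_mul_measureReal μ (f := score φ G e)
    ((measurable_score hφ hG).comp measurable_prodMk_left) (abs_score_le hφG e)
    measurableSet_Ico (by simp)]
  simp_rw [hslice, measureReal_Ioc_eq_sub_of_cdf hμG hG_nonneg (sub_le_self _ he)]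
  exact integral_score_mul_sub_eq_zero hφ_int hφG e

end score

theorem ProbabilityTheory.IndepFun.integral_comp_eq_integral_prod_map {Ω α β : Type*}
    [MeasurableSpace Ω] [MeasurableSpace α] [MeasurableSpace β] {ℙ : Measure Ω} [IsFiniteMeasure ℙ]
    {X : Ω → α} {Y : Ω → β} (hX : Measurable X) (hY : Measurable Y) (hXY : IndepFun X Y ℙ)
    {f : α × β → ℝ} (hf : AEStronglyMeasurable f ((ℙ.map X).prod (ℙ.map Y))) :
    ∫ ω, f (X ω, Y ω) ∂ℙ = ∫ p, f p ∂((ℙ.map X).prod (ℙ.map Y)) := by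
  rw [← (indepFun_iff_map_prod_eq_prod_map_map hX.aemeasurable hY.aemeasurable).1 hXY] at hf ⊢
  exact (integral_map (hX.prodMk hY).aemeasurable hf).symm

theorem integral_withDensity_triangle_eq_zero {M C : ℝ} {h : ℝ × ℝ → ℝ}
    [IsFiniteMeasure (volume.withDensity fun p : ℝ × ℝ =>
      ENNReal.ofReal (if 0 < p.2 ∧ p.2 < p.1 ∧ p.1 < M then 1 / (M * p.1) else 0))]
    (hh : AEStronglyMeasurable h volume) (hhC : ∀ p, |h p| ≤ C)
    (hslice : ∀ e, 0 < e → ∫ v in Ioo 0 e, h (e, v) = 0) :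
    ∫ p, h p ∂(volume.withDensity fun p : ℝ × ℝ =>
      ENNReal.ofReal (if 0 < p.2 ∧ p.2 < p.1 ∧ p.1 < M then 1 / (M * p.1) else 0)) = 0 := by
  set d : ℝ × ℝ → ℝ := fun p => if 0 < p.2 ∧ p.2 < p.1 ∧ p.1 < M then 1 / (M * p.1) else 0
  have hd_nonneg : ∀ p, 0 ≤ d p := fun p => by
    simp only [d]
    split_ifs with hp
    · have : 0 < M := (hp.1.trans hp.2.1).trans hp.2.2
      have : 0 < p.1 := hp.1.trans hp.2.1
      positivity
    · rfl
  have hd : Measurable d := by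
    simp only [d]
    refine Measurable.ite ?_ (by fun_prop) measurable_const
    exact (measurableSet_lt measurable_const measurable_snd).inter
      ((measurableSet_lt measurable_snd measurable_fst).inter
        (measurableSet_lt measurable_fst measurable_const))
  have hd_int : Integrable d := by
    refine ⟨hd.aestronglyMeasurable, (hasFiniteIntegral_iff_ofReal (ae_of_all _ hd_nonneg)).2 ?_⟩
    rw [← setLIntegral_univ, ← withDensity_apply _ MeasurableSet.univ]
    exact measure_lt_top _ _
  have hd_slice : ∀ e v, d (e, v) * h (e, v) =
      (Ioo 0 e).indicator (fun v => (if e < M then 1 / (M * e) else 0) * h (e, v)) v := by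
    intro e v
    by_cases hv : v ∈ Ioo 0 e <;> by_cases he : e < M <;> simp_all [d]
  change ∫ p, h p ∂(volume.withDensity fun p => ENNReal.ofReal (d p)) = 0
  rw [integral_withDensity_eq_integral_toReal_smul hd.ennreal_ofReal
    (ae_of_all _ fun _ => ENNReal.ofReal_lt_top)]
  simp_rw [ENNReal.toReal_ofReal (hd_nonneg _), smul_eq_mul]
  rw [Measure.volume_eq_prod, integral_prod _ (hd_int.mul_bdd hh (ae_of_all _ hhC))]
  refine integral_eq_zero_of_ae (ae_of_all _ fun e => ?_)
  simp_rw [hd_slice e]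
  rw [integral_indicator measurableSet_Ioo, integral_const_mul]
  rcases le_or_gt e 0 with he | he
  · simp [Ioo_eq_empty_of_le he]
  · simp [hslice e he]

theorem score_has_zero_mean_general
    (Ω : Type*) [MeasurableSpace Ω] (ℙ : Measure Ω) [IsProbabilityMeasure ℙ]
    (M M₁ : ℝ)
    (Ev V W : Ω → ℝ) (hEv : Measurable Ev) (hV : Measurable V) (hW : Measurable W)
    -- joint law of (E, V): density 1/(M e) on {0 < v < e < M}
    (hjoint : Measure.map (fun ω => (Ev ω, V ω)) ℙ =
      volume.withDensity (fun p =>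
        ENNReal.ofReal (if 0 < p.2 ∧ p.2 < p.1 ∧ p.1 < M then 1 / (M * p.1) else 0)))
    (G : ℝ → ℝ) (hGmono : Monotone G) (hGcdf : ∀ s, Measure.map W ℙ (Set.Iic s) = ENNReal.ofReal (G s))
    (hG0 : ∀ s : ℝ, s ≤ 0 → G s = 0)
    (hindep : ProbabilityTheory.IndepFun (fun ω => (Ev ω, V ω)) W ℙ)
    (φ : ℝ → ℝ) (hφcont : Continuous φ)
    (hφ0 : φ 0 = 0) (hφM₁ : ∀ s : ℝ, M₁ ≤ s → φ s = 0)
    (C : ℝ) (hφAC : ∀ s t : ℝ, |φ s - φ t| ≤ C * |G s - G t|)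
    (θ : ℝ → ℝ → ℝ)
    (hθ : ∀ e s : ℝ, θ e s =
      if s ≤ e then φ s / G s else (φ s - φ (s - e)) / (G s - G (s - e))) :
    ∫ ω, θ (Ev ω) (V ω + W ω) ∂ℙ = 0 := by
  have hG_nonneg : ∀ s, 0 ≤ G s := fun s =>
    (hG0 _ (min_le_right s 0)).symm.le.trans (hGmono (min_le_left s 0))
  have hφ_nonpos : ∀ s ≤ 0, φ s = 0 := fun s hs => by
    simpa [hφ0, hG0 s hs, hG0 0 le_rfl] using hφAC s 0
  obtain rfl : θ = score φ G := funext₂ fun e s => (hθ e s).trans (ite_eq_score hG0 hφ_nonpos e s)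
  have hφ_int : Integrable φ := hφcont.integrable_of_hasCompactSupport <|
    HasCompactSupport.intro (isCompact_Icc (a := 0) (b := M₁)) fun s hs =>
      (le_total s 0).elim (hφ_nonpos s) fun h => hφM₁ s (le_of_not_ge fun h' => hs ⟨h, h'⟩)
  have hF : Measurable fun p : (ℝ × ℝ) × ℝ => score φ G p.1.1 (p.1.2 + p.2) :=
    (measurable_score hφcont.measurable hGmono.measurable).comp
      (measurable_fst.fst.prodMk (measurable_fst.snd.add measurable_snd))
  rw [hindep.integral_comp_eq_integral_prod_map (hEv.prodMk hV) hW hF.aestronglyMeasurable,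
    integral_prod _ (Integrable.of_bound hF.aestronglyMeasurable |C|
      (ae_of_all _ fun p => abs_score_le hφAC _ _))]
  have hjoint_fin : IsFiniteMeasure (ℙ.map fun ω => (Ev ω, V ω)) := inferInstance
  rw [hjoint] at hjoint_fin ⊢
  refine integral_withDensity_triangle_eq_zero (C := |C|)
    hF.stronglyMeasurable.integral_prod_right'.aestronglyMeasurable (fun p => ?_) fun e he => ?_
  · have : IsProbabilityMeasure (ℙ.map W) := Measure.isProbabilityMeasure_map hW.aemeasurable
    simpa using norm_integral_le_of_norm_le_const (μ := ℙ.map W)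
      (f := fun w => score φ G p.1 (p.2 + w)) (ae_of_all _ fun w => abs_score_le hφAC _ _)
  · -- On `Ico 0 e` the slice of `V + W` is measured by `G` on the half-open `Ioc (s - e) s`.
    rw [← integral_Ico_eq_integral_Ioo]
    exact setIntegral_Ico_integral_score_add_eq_zero _ hGcdf hGmono.measurable hG_nonneg
      hφcont.measurable hφ_int hφAC he.le

/-- Zero-mean property of the score `θ` in the incubation-time model:
`E` is Uniform[0,M], `V` given `E` is Uniform[0,E], `W ~ G` independent,
`S = V + W`, `Δ = 1_{S ≤ E}`.  Then `E[θ(E,S,Δ)] = 0`. -/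
theorem score_has_zero_mean
    (Ω : Type*) [MeasurableSpace Ω] (ℙ : Measure Ω) [IsProbabilityMeasure ℙ]
    (M M₁ : ℝ) (hM₁ : 0 < M₁) (hMM₁ : M₁ ≤ M)
    (Ev V W : Ω → ℝ) (hEv : Measurable Ev) (hV : Measurable V) (hW : Measurable W)
    -- joint law of (E, V): density 1/(M e) on {0 < v < e < M}
    (hjoint : Measure.map (fun ω => (Ev ω, V ω)) ℙ =
      volume.withDensity (fun p =>
        ENNReal.ofReal (if 0 < p.2 ∧ p.2 < p.1 ∧ p.1 < M then 1 / (M * p.1) else 0)))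
    (G : ℝ → ℝ) (hGmono : Monotone G) (hGcdf : ∀ s, Measure.map W ℙ (Set.Iic s) = ENNReal.ofReal (G s))
    (hG0 : ∀ s : ℝ, s ≤ 0 → G s = 0) (hG1 : ∀ s : ℝ, M₁ ≤ s → G s = 1)
    (hindep : ProbabilityTheory.IndepFun (fun ω => (Ev ω, V ω)) W ℙ)
    (φ : ℝ → ℝ) (hφcont : Continuous φ)
    (hφ0 : φ 0 = 0) (hφM₁ : ∀ s : ℝ, M₁ ≤ s → φ s = 0)
    (C : ℝ) (hφAC : ∀ s t : ℝ, |φ s - φ t| ≤ C * |G s - G t|)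
    (θ : ℝ → ℝ → ℝ)
    (hθ : ∀ e s : ℝ, θ e s =
      if s ≤ e then φ s / G s else (φ s - φ (s - e)) / (G s - G (s - e))) :
    ∫ ω, θ (Ev ω) (V ω + W ω) ∂ℙ = 0 :=
  score_has_zero_mean_general Ω ℙ M M₁ Ev V W hEv hV hW hjoint G hGmono hGcdf hG0 hindep φ hφcont
    hφ0 hφM₁ C hφAC θ hθ
end

section
/- Conditional expectation of the score given the incubation time: in the model E ~ Uniform[0,M], V|E ~ Uniform[0,E], S = V + W, Δ = 1_{S≤E}, one has for w ∈ [0,M): E[θ(E,S,Δ) | W = w] = ∫_{e∈[w,M]} (1/(Me))·∫_{s∈[w,e]} φ(s)/G(s) ds de + ∫_{e∈[w,M]} (1/(Me))·∫_{s∈[e,w+e]} (φ(s)−φ(s−e))/(G(s)−G(s−e)) ds de + ∫_{e∈(0,w]} (1/(Me))·∫_{s∈[w,w+e]} (φ(s)−φ(s−e))/(G(s)−G(s−e)) ds de. -/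
/-!
Fubini over the triangle `0 < v < e < M`: the section at `e` of the weighted integrand is
`1 / (M e)` times the integral of `θ(e, w + v)` over `v ∈ (0, e)`, i.e. of `θ(e, ·)` over
`(w, w + e)`. The bound `|φ s - φ t| ≤ C |G s - G t|` (with `φ 0 = G 0 = 0`) makes the score
bounded by `|C|`, so every section average is bounded by `|C| / M` and Fubini applies despite the
singular weight. Finally `(w, w + e)` splits at `s = e`, which lies inside it exactly when `w ≤ e`.
-/

open MeasureTheory Set

lemma abs_div_le_of_abs_le_mul {x y K : ℝ} (hK : 0 ≤ K) (h : |x| ≤ K * |y|) : |x / y| ≤ K := by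
  rcases eq_or_ne y 0 with rfl | hy
  · simpa using hK
  · rwa [abs_div, div_le_iff₀ (abs_pos.mpr hy)]

lemma intervalIntegrable_of_abs_le {f : ℝ → ℝ} {K : ℝ} (hf : Measurable f) (hK : ∀ x, |f x| ≤ K)
    (a b : ℝ) : IntervalIntegrable f volume a b :=
  (intervalIntegrable_const (c := K)).mono_fun' hf.aestronglyMeasurable (ae_of_all _ hK)

lemma abs_one_div_mul_integral_le {h : ℝ → ℝ} {K M a b e : ℝ} (hM : 0 < M) (he : 0 < e)
    (hab : |b - a| ≤ e) (hK : ∀ x, |h x| ≤ K) :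
    |1 / (M * e) * ∫ x in a..b, h x| ≤ K / M := by
  have hK0 : 0 ≤ K := (abs_nonneg _).trans (hK 0)
  have hint : ‖∫ x in a..b, h x‖ ≤ K * |b - a| :=
    intervalIntegral.norm_integral_le_of_norm_le_const fun x _ => hK x
  rw [abs_mul, abs_of_pos (by positivity : 0 < 1 / (M * e))]
  calc 1 / (M * e) * |∫ x in a..b, h x| ≤ 1 / (M * e) * (K * e) := by
        gcongr
        exact hint.trans (by gcongr)
    _ = K / M := by field_simp

lemma intervalIntegrable_one_div_mul_integral {ψ : ℝ → ℝ} {K M w b : ℝ} (hψ : Measurable ψ)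
    (hK : ∀ s, |ψ s| ≤ K) (hM : 0 < M) (hw : 0 ≤ w) (hwb : w ≤ b) :
    IntervalIntegrable (fun e => 1 / (M * e) * ∫ s in w..e, ψ s) volume w b := by
  have hprimitive : Continuous fun e => ∫ s in w..e, ψ s :=
    intervalIntegral.continuous_primitive (intervalIntegrable_of_abs_le hψ hK) w
  refine (intervalIntegrable_const (c := K / M)).mono_fun'
    ((by fun_prop : Measurable fun e : ℝ => 1 / (M * e)).mul
      hprimitive.measurable).aestronglyMeasurable
    ((ae_restrict_iff' measurableSet_uIoc).mpr (ae_of_all _ fun e he => ?_))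
  rw [uIoc_of_le hwb] at he
  exact abs_one_div_mul_integral_le hM (hw.trans_lt he.1)
    (by rw [abs_of_nonneg (by linarith [he.1])]; linarith) hK

/-- `f` weighted by the joint density `1 / (M e)` on `0 < v < e < M` of `(E, V)`, where
`E ~ Uniform[0, M]` and `V | E ~ Uniform[0, E]`. -/
noncomputable def nestedUniformWeighted (M : ℝ) (f : ℝ × ℝ → ℝ) (p : ℝ × ℝ) : ℝ :=
  if 0 < p.2 ∧ p.2 < p.1 ∧ p.1 < M then f p / (M * p.1) else 0

section nestedUniformWeighted

variable {M : ℝ} {f : ℝ × ℝ → ℝ}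

lemma nestedUniformWeighted_section_of_mem {e : ℝ} (he : e ∈ Ioo 0 M) :
    (fun v => nestedUniformWeighted M f (e, v)) =
      (Ioo 0 e).indicator fun v => f (e, v) / (M * e) := by
  ext v
  simp [nestedUniformWeighted, indicator_apply, he.2]

lemma nestedUniformWeighted_section_of_notMem {e : ℝ} (he : e ∉ Ioo 0 M) :
    (fun v => nestedUniformWeighted M f (e, v)) = 0 := by
  ext v
  exact if_neg fun h => he ⟨h.1.trans h.2.1, h.2.2⟩

lemma integral_nestedUniformWeighted_section (e : ℝ) :
    ∫ v, nestedUniformWeighted M f (e, v) =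
      (Ioo 0 M).indicator (fun e => 1 / (M * e) * ∫ v in 0..e, f (e, v)) e := by
  by_cases he : e ∈ Ioo 0 M
  · rw [indicator_of_mem he, nestedUniformWeighted_section_of_mem he,
      integral_indicator measurableSet_Ioo, ← integral_Ioc_eq_integral_Ioo,
      ← intervalIntegral.integral_of_le he.1.le, intervalIntegral.integral_div]
    ring
  · rw [indicator_of_notMem he, nestedUniformWeighted_section_of_notMem he, Pi.zero_def,
      integral_zero]

lemma norm_nestedUniformWeighted (p : ℝ × ℝ) :
    ‖nestedUniformWeighted M f p‖ = nestedUniformWeighted M (fun p => ‖f p‖) p := by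
  unfold nestedUniformWeighted
  split_ifs with h
  · have hp : 0 < p.1 := h.1.trans h.2.1
    rw [norm_div, Real.norm_of_nonneg (mul_pos (hp.trans h.2.2) hp).le]
  · exact norm_zero

lemma measurable_nestedUniformWeighted (hf : Measurable f) :
    Measurable (nestedUniformWeighted M f) :=
  Measurable.ite ((measurableSet_lt measurable_const measurable_snd).inter
    ((measurableSet_lt measurable_snd measurable_fst).inter
      (measurableSet_lt measurable_fst measurable_const)))
    (hf.div (measurable_const.mul measurable_fst)) measurable_const

lemma integrable_nestedUniformWeighted {K : ℝ} (hf : Measurable f) (hK : ∀ p, |f p| ≤ K) :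
    Integrable (nestedUniformWeighted M f) := by
  rw [Measure.volume_eq_prod,
    integrable_prod_iff (measurable_nestedUniformWeighted hf).aestronglyMeasurable]
  have hsection : ∀ e, Measurable fun v => f (e, v) := fun e => hf.comp measurable_prodMk_left
  refine ⟨ae_of_all _ fun e => ?_, ?_⟩
  · by_cases he : e ∈ Ioo 0 M
    · rw [nestedUniformWeighted_section_of_mem he, integrable_indicator_iff measurableSet_Ioo]
      refine Measure.integrableOn_of_bounded (M := K / (M * e)) measure_Ioo_lt_top.ne
        ((hsection e).div_const _).aestronglyMeasurable (ae_of_all _ fun v => ?_)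
      have hMe : 0 < M * e := mul_pos (he.1.trans he.2) he.1
      rw [Real.norm_eq_abs, abs_div, abs_of_pos hMe]
      exact div_le_div_of_nonneg_right (hK _) hMe.le
    · rw [nestedUniformWeighted_section_of_notMem he]
      exact integrable_zero _ _ _
  · have hbound : Integrable ((Ioo 0 M).indicator fun _ => K / M) :=
      (integrable_indicator_iff measurableSet_Ioo).mpr (integrableOn_const measure_Ioo_lt_top.ne)
    refine hbound.mono'
      (measurable_nestedUniformWeighted hf).aestronglyMeasurable.norm.integral_prod_right'
      (ae_of_all _ fun e => ?_)
    simp only [norm_nestedUniformWeighted, integral_nestedUniformWeighted_section,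
      norm_indicator_eq_indicator_norm]
    by_cases he : e ∈ Ioo 0 M
    · rw [indicator_of_mem he, indicator_of_mem he]
      exact abs_one_div_mul_integral_le (h := fun v => ‖f (e, v)‖) (hM := he.1.trans he.2) he.1
        (by rw [sub_zero, abs_of_pos he.1]) fun v => by simpa using hK (e, v)
    · simp [indicator_of_notMem he]

lemma intervalIntegrable_nestedUniformWeighted_average {K : ℝ} (hM : 0 ≤ M) (hf : Measurable f)
    (hK : ∀ p, |f p| ≤ K) :
    IntervalIntegrable (fun e => 1 / (M * e) * ∫ v in 0..e, f (e, v)) volume 0 M := by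
  have h := (Measure.volume_eq_prod ℝ ℝ ▸
    integrable_nestedUniformWeighted (M := M) hf hK).integral_prod_left
  simp only [integral_nestedUniformWeighted_section,
    integrable_indicator_iff measurableSet_Ioo] at h
  exact (intervalIntegrable_iff_integrableOn_Ioo_of_le hM).mpr h

lemma integral_nestedUniformWeighted {K : ℝ} (hM : 0 ≤ M) (hf : Measurable f)
    (hK : ∀ p, |f p| ≤ K) :
    ∫ p, nestedUniformWeighted M f p = ∫ e in 0..M, 1 / (M * e) * ∫ v in 0..e, f (e, v) := by
  rw [Measure.volume_eq_prod, integral_prod _ (integrable_nestedUniformWeighted hf hK)]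
  simp only [integral_nestedUniformWeighted_section]
  rw [integral_indicator measurableSet_Ioo, ← integral_Ioc_eq_integral_Ioo,
    intervalIntegral.integral_of_le hM]

end nestedUniformWeighted

/-- The score `θ(e, s, δ)` with `δ = 1_{s ≤ e}`; Lean's `x / 0 = 0` is the convention `0/0 := 0`. -/
noncomputable def censoredScore (φ G : ℝ → ℝ) (e s : ℝ) : ℝ :=
  if s ≤ e then φ s / G s else (φ s - φ (s - e)) / (G s - G (s - e))

section censoredScore

variable {φ G : ℝ → ℝ}

lemma measurable_censoredScore (hφ : Measurable φ) (hG : Measurable G) :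
    Measurable fun p : ℝ × ℝ => censoredScore φ G p.1 p.2 :=
  Measurable.ite (measurableSet_le measurable_snd measurable_fst) (by fun_prop) (by fun_prop)

lemma abs_censoredScore_le {C : ℝ} (hφ0 : φ 0 = 0) (hG0 : G 0 = 0)
    (hφG : ∀ s t, |φ s - φ t| ≤ C * |G s - G t|) (e s : ℝ) : |censoredScore φ G e s| ≤ |C| := by
  have hratio : ∀ s t, |(φ s - φ t) / (G s - G t)| ≤ |C| := fun s t =>
    abs_div_le_of_abs_le_mul (abs_nonneg C) ((hφG s t).trans (by gcongr; exact le_abs_self C))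
  unfold censoredScore
  split_ifs
  · simpa [hφ0, hG0] using hratio s 0
  · exact hratio s (s - e)

lemma integral_censoredScore_of_le {e w : ℝ} (he : 0 ≤ e) (hew : e ≤ w) :
    ∫ s in w..w + e, censoredScore φ G e s =
      ∫ s in w..w + e, (φ s - φ (s - e)) / (G s - G (s - e)) := by
  refine intervalIntegral.integral_congr_ae (ae_of_all _ fun s hs => if_neg ?_)
  rw [uIoc_of_le (by linarith)] at hs
  exact not_le.mpr (hew.trans_lt hs.1)

lemma integral_censoredScore_of_ge {K e w : ℝ} (hφ : Measurable φ) (hG : Measurable G)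
    (hK : ∀ s, |censoredScore φ G e s| ≤ K) (hw : 0 ≤ w) (hwe : w ≤ e) :
    ∫ s in w..w + e, censoredScore φ G e s =
      (∫ s in w..e, φ s / G s) + ∫ s in e..w + e, (φ s - φ (s - e)) / (G s - G (s - e)) := by
  have hint : ∀ a b, IntervalIntegrable (censoredScore φ G e) volume a b :=
    intervalIntegrable_of_abs_le ((measurable_censoredScore hφ hG).comp measurable_prodMk_left) hK
  rw [← intervalIntegral.integral_add_adjacent_intervals (hint w e) (hint e (w + e))]
  congr 1
  · refine intervalIntegral.integral_congr fun s hs => if_pos ?_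
    rw [uIcc_of_le hwe] at hs
    exact hs.2
  · refine intervalIntegral.integral_congr_ae (ae_of_all _ fun s hs => if_neg ?_)
    rw [uIoc_of_le (by linarith)] at hs
    exact not_le.mpr hs.1

lemma integral_average_censoredScore_of_ge {K M w : ℝ} (hφ : Measurable φ) (hG : Measurable G)
    (hK : ∀ e s, |censoredScore φ G e s| ≤ K) (hM : 0 < M) (hw : 0 ≤ w) (hwM : w ≤ M)
    (hint : IntervalIntegrable (fun e => 1 / (M * e) * ∫ s in w..w + e, censoredScore φ G e s)
      volume w M) :
    ∫ e in w..M, 1 / (M * e) * ∫ s in w..w + e, censoredScore φ G e s =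
      (∫ e in w..M, 1 / (M * e) * ∫ s in w..e, φ s / G s) +
        ∫ e in w..M, 1 / (M * e) * ∫ s in e..w + e, (φ s - φ (s - e)) / (G s - G (s - e)) := by
  have hsplit : ∀ e ∈ uIcc w M, 1 / (M * e) * ∫ s in w..w + e, censoredScore φ G e s =
      1 / (M * e) * (∫ s in w..e, φ s / G s) +
        1 / (M * e) * ∫ s in e..w + e, (φ s - φ (s - e)) / (G s - G (s - e)) := fun e he => by
    rw [uIcc_of_le hwM] at he
    rw [integral_censoredScore_of_ge hφ hG (hK e) hw he.1, mul_add]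
  have hfirst := intervalIntegrable_one_div_mul_integral (ψ := fun s => φ s / G s) (hφ.div hG)
    (fun s => by simpa [censoredScore] using hK s s) hM hw hwM
  have hsecond :
      ∫ e in w..M, 1 / (M * e) * ∫ s in e..w + e, (φ s - φ (s - e)) / (G s - G (s - e)) =
      (∫ e in w..M, 1 / (M * e) * ∫ s in w..w + e, censoredScore φ G e s) -
        ∫ e in w..M, 1 / (M * e) * ∫ s in w..e, φ s / G s := by
    rw [← intervalIntegral.integral_sub hint hfirst]
    exact intervalIntegral.integral_congr fun e he => by simp only [hsplit e he]; ring
  linarith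

lemma integral_average_censoredScore_of_le {M w : ℝ} (hw : 0 ≤ w) :
    ∫ e in 0..w, 1 / (M * e) * ∫ s in w..w + e, censoredScore φ G e s =
      ∫ e in 0..w, 1 / (M * e) * ∫ s in w..w + e, (φ s - φ (s - e)) / (G s - G (s - e)) :=
  intervalIntegral.integral_congr fun e he => by
    rw [uIcc_of_le hw] at he
    rw [integral_censoredScore_of_le he.1 he.2]

lemma integral_average_censoredScore {K M w : ℝ} (hφ : Measurable φ) (hG : Measurable G)
    (hK : ∀ e s, |censoredScore φ G e s| ≤ K) (hM : 0 < M) (hw : 0 ≤ w) (hwM : w ≤ M)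
    (hint : IntervalIntegrable (fun e => 1 / (M * e) * ∫ s in w..w + e, censoredScore φ G e s)
      volume 0 M) :
    ∫ e in 0..M, 1 / (M * e) * ∫ s in w..w + e, censoredScore φ G e s =
      (∫ e in w..M, 1 / (M * e) * ∫ s in w..e, φ s / G s) +
        (∫ e in w..M, 1 / (M * e) * ∫ s in e..w + e, (φ s - φ (s - e)) / (G s - G (s - e))) +
          ∫ e in 0..w, 1 / (M * e) * ∫ s in w..w + e, (φ s - φ (s - e)) / (G s - G (s - e)) := by
  have hw' : w ∈ uIcc 0 M := by rw [uIcc_of_le hM.le]; exact ⟨hw, hwM⟩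
  rw [← intervalIntegral.integral_add_adjacent_intervals
      (hint.mono_set (uIcc_subset_uIcc_left hw')) (hint.mono_set (uIcc_subset_uIcc_right hw')),
    integral_average_censoredScore_of_le hw, integral_average_censoredScore_of_ge hφ hG hK hM hw
      hwM (hint.mono_set (uIcc_subset_uIcc_right hw'))]
  ring

end censoredScore

theorem score_conditional_expectation_given_W_general
    (M : ℝ) (hM : 0 < M) (w : ℝ) (hw0 : 0 ≤ w) (hwM : w < M)
    (G : ℝ → ℝ) (hGcont : Continuous G)
    (hG0 : ∀ s : ℝ, s ≤ 0 → G s = 0)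
    (φ : ℝ → ℝ) (hφcont : Continuous φ) (hφ0 : φ 0 = 0)
    (C : ℝ) (hφAC : ∀ s t : ℝ, |φ s - φ t| ≤ C * |G s - G t|)
    (θ : ℝ → ℝ → ℝ)
    (hθ : ∀ e s : ℝ, θ e s =
      if s ≤ e then φ s / G s else (φ s - φ (s - e)) / (G s - G (s - e))) :
    (∫ p : ℝ × ℝ,
        if 0 < p.2 ∧ p.2 < p.1 ∧ p.1 < M then θ p.1 (w + p.2) / (M * p.1) else 0) =
      (∫ e in w..M, (1 / (M * e)) * ∫ s in w..e, φ s / G s)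
      + (∫ e in w..M, (1 / (M * e)) *
          ∫ s in e..(w + e), (φ s - φ (s - e)) / (G s - G (s - e)))
      + (∫ e in (0 : ℝ)..w, (1 / (M * e)) *
          ∫ s in w..(w + e), (φ s - φ (s - e)) / (G s - G (s - e))) := by
  obtain rfl : θ = censoredScore φ G := funext fun e => funext (hθ e)
  have hK := abs_censoredScore_le hφ0 (hG0 0 le_rfl) hφAC
  have hf : Measurable fun p : ℝ × ℝ => censoredScore φ G p.1 (w + p.2) :=
    (measurable_censoredScore hφcont.measurable hGcont.measurable).comp
      (measurable_fst.prodMk (measurable_snd.const_add w))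
  have hshift : ∀ e, ∫ v in 0..e, censoredScore φ G e (w + v) =
      ∫ s in w..w + e, censoredScore φ G e s := fun e => by
    rw [intervalIntegral.integral_comp_add_left (censoredScore φ G e) w, add_zero]
  have hint := intervalIntegrable_nestedUniformWeighted_average hM.le hf fun p => hK _ _
  simp only [hshift] at hint
  change ∫ p, nestedUniformWeighted M (fun p => censoredScore φ G p.1 (w + p.2)) p = _
  rw [integral_nestedUniformWeighted hM.le hf fun p => hK _ _]
  simp only [hshift]
  exact integral_average_censoredScore hφcont.measurable hGcont.measurable hK hM hw0 hwM.le hint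

/-- Conditional expectation of the score given the incubation time `W = w`:
integrating `θ(E, w + V, 1_{w+V ≤ E})` against the joint density of `(E,V)`
(`E ~ Uniform[0,M]`, `V | E ~ Uniform[0,E]`) gives the three-term formula. -/
theorem score_conditional_expectation_given_W
    (M : ℝ) (hM : 0 < M) (w : ℝ) (hw0 : 0 ≤ w) (hwM : w < M)
    (G : ℝ → ℝ) (hGmono : Monotone G) (hGcont : Continuous G)
    (hG0 : ∀ s : ℝ, s ≤ 0 → G s = 0) (hG1 : ∀ s : ℝ, G s ≤ 1)
    (φ : ℝ → ℝ) (hφcont : Continuous φ) (hφ0 : φ 0 = 0)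
    (C : ℝ) (hφAC : ∀ s t : ℝ, |φ s - φ t| ≤ C * |G s - G t|)
    (θ : ℝ → ℝ → ℝ)
    (hθ : ∀ e s : ℝ, θ e s =
      if s ≤ e then φ s / G s else (φ s - φ (s - e)) / (G s - G (s - e))) :
    (∫ p : ℝ × ℝ,
        if 0 < p.2 ∧ p.2 < p.1 ∧ p.1 < M then θ p.1 (w + p.2) / (M * p.1) else 0) =
      (∫ e in w..M, (1 / (M * e)) * ∫ s in w..e, φ s / G s)
      + (∫ e in w..M, (1 / (M * e)) *
          ∫ s in e..(w + e), (φ s - φ (s - e)) / (G s - G (s - e)))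
      + (∫ e in (0 : ℝ)..w, (1 / (M * e)) *
          ∫ s in w..(w + e), (φ s - φ (s - e)) / (G s - G (s - e))) :=
  score_conditional_expectation_given_W_general M hM w hw0 hwM G hGcont hG0 φ hφcont hφ0 C hφAC θ hθ
end

section
/- Self-consistency characterization of the discrete MLE: a probability vector p̂ with support J = {j : p̂_j > 0} maximizes ℓ(p) = (1/n)Σ_{i=1}^n log(Σ_{j∈A_i} p_j) over the simplex if and only if (1/n)·Σ_{i=1}^n 1_{j∈A_i}/(Σ_{k∈A_i} p̂_k) ≤ 1 for all j, with equality for j ∈ J. -/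
/-!
The log-likelihood `ℓ` is concave, so `p̂` is a maximizer iff no feasible direction increases it
to first order. Its gradient `g` at `p̂` satisfies `∑ₖ p̂ₖ gₖ = 1`, and the tangent-line bound
`log y ≤ log x + (y - x) / x` gives `ℓ q ≤ ℓ p̂ + ∑ₖ (qₖ - p̂ₖ) gₖ = ℓ p̂ + ∑ₖ qₖ gₖ - 1`, which is
`≤ ℓ p̂` as soon as every `gⱼ ≤ 1`. Conversely, at a maximizer the directional derivatives along
`eⱼ - p̂` and, when `p̂ⱼ > 0`, along `p̂ - eⱼ` are nonpositive; they equal `gⱼ - 1` and `1 - gⱼ`.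
-/

open Filter Set Topology

namespace DiscreteMLE

variable {ι κ : Type*} [Fintype ι] [Fintype κ] (A : ι → Finset κ)

noncomputable def logLik (p : κ → ℝ) : ℝ :=
  (1 / (Fintype.card ι : ℝ)) * ∑ i, Real.log (∑ k ∈ A i, p k)

def feasibleSimplex : Set (κ → ℝ) :=
  {q | (∀ j, 0 ≤ q j) ∧ ∑ j, q j = 1 ∧ ∀ i, 0 < ∑ k ∈ A i, q k}

theorem eventually_add_smul_mem_feasibleSimplex {p v : κ → ℝ} (hp : p ∈ feasibleSimplex A)
    (hv : ∑ k, v k = 0) (hsupp : ∀ k, p k = 0 → 0 ≤ v k) :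
    ∀ᶠ t in 𝓝[>] (0 : ℝ), p + t • v ∈ feasibleSimplex A := by
  obtain ⟨hnonneg, hsum, hmass⟩ := hp
  have hcoord : ∀ᶠ t in 𝓝[>] (0 : ℝ), ∀ j, 0 ≤ (p + t • v) j := by
    refine eventually_all.2 fun j => ?_
    rcases (hnonneg j).eq_or_lt with hj | hj
    · filter_upwards [self_mem_nhdsWithin] with t (ht : 0 < t)
      simpa [← hj] using mul_nonneg ht.le (hsupp j hj.symm)
    · refine nhdsWithin_le_nhds ?_
      have hcont : Continuous fun t : ℝ => (p + t • v) j := by fun_prop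
      filter_upwards [(hcont.tendsto' 0 (p j) (by simp)).eventually_const_lt hj] with t ht
      exact ht.le
  have hpos : ∀ᶠ t in 𝓝[>] (0 : ℝ), ∀ i, 0 < ∑ k ∈ A i, (p + t • v) k := by
    refine eventually_all.2 fun i => nhdsWithin_le_nhds ?_
    have hcont : Continuous fun t : ℝ => ∑ k ∈ A i, (p + t • v) k := by fun_prop
    exact (hcont.tendsto' 0 _ (by simp)).eventually_const_lt (hmass i)
  filter_upwards [hcoord, hpos] with t hct hpt
  refine ⟨hct, ?_, hpt⟩
  simp [Finset.sum_add_distrib, ← Finset.mul_sum, hsum, hv]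

variable [DecidableEq κ]

noncomputable def logLikGrad (p : κ → ℝ) (j : κ) : ℝ :=
  (1 / (Fintype.card ι : ℝ)) * ∑ i, if j ∈ A i then (∑ k ∈ A i, p k)⁻¹ else 0

theorem sum_mul_logLikGrad (p v : κ → ℝ) :
    ∑ k, v k * logLikGrad A p k =
      (1 / (Fintype.card ι : ℝ)) * ∑ i, (∑ k ∈ A i, v k) / ∑ k ∈ A i, p k := by
  simp only [logLikGrad, Finset.mul_sum, mul_ite, mul_zero, div_eq_mul_inv, Finset.sum_mul]
  rw [Finset.sum_comm]
  refine Finset.sum_congr rfl fun i _ => ?_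
  rw [← Finset.sum_filter, Finset.filter_mem_eq_inter, Finset.univ_inter]
  exact Finset.sum_congr rfl fun k _ => by ring

theorem sum_mul_logLikGrad_self [Nonempty ι] {p : κ → ℝ} (hp : ∀ i, ∑ k ∈ A i, p k ≠ 0) :
    ∑ k, p k * logLikGrad A p k = 1 := by
  simp [sum_mul_logLikGrad, div_self (hp _)]

theorem hasFDerivAt_logLik {p : κ → ℝ} (hp : ∀ i, 0 < ∑ k ∈ A i, p k) :
    HasFDerivAt (logLik A)
      (∑ k, logLikGrad A p k • (ContinuousLinearMap.proj k : (κ → ℝ) →L[ℝ] ℝ)) p := by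
  have hmass (i : ι) : HasFDerivAt (fun q : κ → ℝ => ∑ k ∈ A i, q k)
      (∑ k ∈ A i, (ContinuousLinearMap.proj k : (κ → ℝ) →L[ℝ] ℝ)) p :=
    HasFDerivAt.fun_sum fun k _ => hasFDerivAt_apply k p
  refine ((HasFDerivAt.fun_sum (u := Finset.univ) fun i _ => (hmass i).log (hp i).ne').const_mul
    (1 / (Fintype.card ι : ℝ))).congr_fderiv (ContinuousLinearMap.ext fun v => ?_)
  simp only [sum_apply, smul_apply, ContinuousLinearMap.proj_apply, smul_eq_mul]
  rw [← Finset.sum_congr rfl fun k _ => mul_comm (v k) _, sum_mul_logLikGrad]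
  simp [div_eq_inv_mul]

theorem logLik_le_add_sum_mul_logLikGrad {p q : κ → ℝ} (hp : ∀ i, 0 < ∑ k ∈ A i, p k)
    (hq : ∀ i, 0 < ∑ k ∈ A i, q k) :
    logLik A q ≤ logLik A p + ∑ k, (q k - p k) * logLikGrad A p k := by
  rw [sum_mul_logLikGrad, logLik, logLik, ← mul_add, ← Finset.sum_add_distrib]
  gcongr with i
  have hlog := Real.log_le_sub_one_of_pos (div_pos (hq i) (hp i))
  rw [Real.log_div (hq i).ne' (hp i).ne'] at hlog
  rw [Finset.sum_sub_distrib, sub_div, div_self (hp i).ne']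
  linarith

theorem sum_mul_logLikGrad_nonpos_of_isMaxOn {p v : κ → ℝ}
    (hmax : IsMaxOn (logLik A) (feasibleSimplex A) p) (hp : p ∈ feasibleSimplex A)
    (hv : ∑ k, v k = 0) (hsupp : ∀ k, p k = 0 → 0 ≤ v k) :
    ∑ k, v k * logLikGrad A p k ≤ 0 := by
  have := hmax.localize.hasFDerivWithinAt_nonpos (hasFDerivAt_logLik A hp.2.2).hasFDerivWithinAt
    (mem_posTangentConeAt_of_frequently_mem
      (eventually_add_smul_mem_feasibleSimplex A hp hv hsupp).frequently)
  simpa [mul_comm] using this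

theorem isMaxOn_logLik_iff [Nonempty ι] {p : κ → ℝ} (hp : p ∈ feasibleSimplex A) :
    IsMaxOn (logLik A) (feasibleSimplex A) p ↔
      ∀ j, logLikGrad A p j ≤ 1 ∧ (0 < p j → logLikGrad A p j = 1) := by
  have hself := sum_mul_logLikGrad_self A fun i => (hp.2.2 i).ne'
  constructor
  · intro hmax j
    have toward := sum_mul_logLikGrad_nonpos_of_isMaxOn A hmax hp (v := Pi.single j 1 - p)
      (by simp [Finset.sum_sub_distrib, hp.2.1]) fun k hk => by
        simp [hk, Pi.single_apply, apply_ite]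
    simp only [Pi.sub_apply, sub_mul, Finset.sum_sub_distrib, hself, Pi.single_apply, ite_mul,
      one_mul, zero_mul, Finset.sum_ite_eq', Finset.mem_univ, if_true] at toward
    refine ⟨by linarith, fun hj => ?_⟩
    have away := sum_mul_logLikGrad_nonpos_of_isMaxOn A hmax hp (v := p - Pi.single j 1)
      (by simp [Finset.sum_sub_distrib, hp.2.1]) fun k hk => by
        simp [show k ≠ j from fun h => hj.ne' (h ▸ hk), hk]
    simp only [Pi.sub_apply, sub_mul, Finset.sum_sub_distrib, hself, Pi.single_apply, ite_mul,
      one_mul, zero_mul, Finset.sum_ite_eq', Finset.mem_univ, if_true] at away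
    linarith
  · intro hkkt q hq
    calc logLik A q ≤ logLik A p + ∑ k, (q k - p k) * logLikGrad A p k :=
          logLik_le_add_sum_mul_logLikGrad A hp.2.2 hq.2.2
      _ = logLik A p + (∑ k, q k * logLikGrad A p k - 1) := by
          rw [← hself, ← Finset.sum_sub_distrib]; simp only [sub_mul]
      _ ≤ logLik A p + (∑ k, q k - 1) := by
          gcongr with k
          exact mul_le_of_le_one_right (hq.1 k) (hkkt k).1
      _ = logLik A p := by rw [hq.2.1]; ring

end DiscreteMLE

open DiscreteMLE

theorem discrete_mle_self_consistency_general
    (m n : ℕ) (hn : 0 < n)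
    (A : Fin n → Finset (Fin m))
    (ℓ : (Fin m → ℝ) → ℝ)
    (hℓ : ∀ p : Fin m → ℝ, ℓ p = (1 / (n : ℝ)) * ∑ i, Real.log (∑ j ∈ A i, p j))
    (phat : Fin m → ℝ) (hphat : ∀ j, 0 ≤ phat j) (hsum : ∑ j, phat j = 1)
    (hpos : ∀ i, 0 < ∑ k ∈ A i, phat k) :
    (∀ q : Fin m → ℝ, (∀ j, 0 ≤ q j) → ∑ j, q j = 1 →
        (∀ i, 0 < ∑ k ∈ A i, q k) → ℓ q ≤ ℓ phat) ↔
      (∀ j : Fin m,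
        (1 / (n : ℝ)) * (∑ i, if j ∈ A i then (∑ k ∈ A i, phat k)⁻¹ else 0) ≤ 1 ∧
        (0 < phat j →
          (1 / (n : ℝ)) * (∑ i, if j ∈ A i then (∑ k ∈ A i, phat k)⁻¹ else 0) = 1)) := by
  have : Nonempty (Fin n) := ⟨⟨0, hn⟩⟩
  obtain rfl : ℓ = logLik A := funext fun p => by simp [hℓ, logLik]
  simpa only [isMaxOn_iff, feasibleSimplex, logLikGrad, Fintype.card_fin, mem_ofPred_eq, and_imp]
    using isMaxOn_logLik_iff A ⟨hphat, hsum, hpos⟩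

/-- Self-consistency (KKT) characterization of the discrete MLE: a probability
vector `p̂` maximizes `ℓ(p) = (1/n) ∑ᵢ log (∑_{j ∈ Aᵢ} p_j)` over the simplex
(restricted to vectors giving every `Aᵢ` positive mass, where the likelihood
is finite) iff the self-consistency conditions hold. -/
theorem discrete_mle_self_consistency
    (m n : ℕ) (hm : 0 < m) (hn : 0 < n)
    (A : Fin n → Finset (Fin m)) (hA : ∀ i, (A i).Nonempty)
    (ℓ : (Fin m → ℝ) → ℝ)
    (hℓ : ∀ p : Fin m → ℝ, ℓ p = (1 / (n : ℝ)) * ∑ i, Real.log (∑ j ∈ A i, p j))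
    (phat : Fin m → ℝ) (hphat : ∀ j, 0 ≤ phat j) (hsum : ∑ j, phat j = 1)
    (hpos : ∀ i, 0 < ∑ k ∈ A i, phat k) :
    (∀ q : Fin m → ℝ, (∀ j, 0 ≤ q j) → ∑ j, q j = 1 →
        (∀ i, 0 < ∑ k ∈ A i, q k) → ℓ q ≤ ℓ phat) ↔
      (∀ j : Fin m,
        (1 / (n : ℝ)) * (∑ i, if j ∈ A i then (∑ k ∈ A i, phat k)⁻¹ else 0) ≤ 1 ∧
        (0 < phat j →
          (1 / (n : ℝ)) * (∑ i, if j ∈ A i then (∑ k ∈ A i, phat k)⁻¹ else 0) = 1)) :=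
  discrete_mle_self_consistency_general m n hn A ℓ hℓ phat hphat hsum hpos
end

section
/- EM monotonicity for the mixture likelihood: one step of the EM iteration p_j' = p_j·(1/n)·Σ_{i=1}^n 1_{j∈A_i}/(Σ_{k∈A_i} p_k) does not decrease the log-likelihood: ℓ(p') ≥ ℓ(p), where ℓ(p) = (1/n)·Σ_{i=1}^n log(Σ_{j∈A_i} p_j). -/
/-! Write the EM update as `p' j = p j * r j`. For each `i`, Jensen's inequality for `log` with
weights `p j / ∑_{k ∈ A i} p k` gives `log (∑_{A i} p' / ∑_{A i} p) ≥ ∑_{A i} (p j / ∑_{A i} p) log (r j)`.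
Averaging over `i` and exchanging the sums turns the right-hand side into `∑ j, p' j * log (r j)`,
the Kullback–Leibler divergence of `p'` from `p`, which is nonnegative because `∑ p' = 1 ≥ ∑ p`. -/

open Finset Real

lemma sum_mul_log_div_le_log_sum_mul_div {α : Type*} {s : Finset α} {w x : α → ℝ}
    (hw : ∀ j ∈ s, 0 ≤ w j) (hW : 0 < ∑ j ∈ s, w j) (hx : ∀ j ∈ s, 0 < x j) :
    (∑ j ∈ s, w j * log (x j)) / ∑ j ∈ s, w j ≤
      log ((∑ j ∈ s, w j * x j) / ∑ j ∈ s, w j) := by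
  simpa [centerMass, div_eq_inv_mul] using
    strictConcaveOn_log_Ioi.concaveOn.le_map_centerMass hw hW hx

lemma sum_mul_mul_log_nonneg {α : Type*} [Fintype α] {p r : α → ℝ}
    (hp : ∀ j, 0 ≤ p j) (hr : ∀ j, 0 ≤ r j) (h : ∑ j, p j ≤ ∑ j, p j * r j) :
    0 ≤ ∑ j, p j * r j * log (r j) :=
  calc 0 ≤ ∑ j, p j * r j - ∑ j, p j := sub_nonneg.2 h
    _ = ∑ j, p j * (r j - 1) := by rw [← sum_sub_distrib]; simp only [mul_sub, mul_one]
    _ ≤ ∑ j, p j * (r j * log (r j)) :=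
      sum_le_sum fun j _ => mul_le_mul_of_nonneg_left (self_sub_one_le_mul_log (hr j)) (hp j)
    _ = ∑ j, p j * r j * log (r j) := by simp only [mul_assoc]

section EMStep

variable {ι α : Type*} [Fintype ι] [DecidableEq α]

/-- The EM update is `p' j = p j * emRatio A p j`; the ratio avoids dividing by `p j`, which may vanish. -/
noncomputable def emRatio (A : ι → Finset α) (p : α → ℝ) (j : α) : ℝ :=
  (Fintype.card ι : ℝ)⁻¹ * ∑ i, if j ∈ A i then (∑ k ∈ A i, p k)⁻¹ else 0

variable {A : ι → Finset α} {p : α → ℝ}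

lemma emRatio_nonneg (hS : ∀ i, 0 ≤ ∑ k ∈ A i, p k) (j : α) : 0 ≤ emRatio A p j :=
  mul_nonneg (by positivity) <| sum_nonneg fun i _ => by
    split_ifs
    exacts [inv_nonneg.2 (hS i), le_rfl]

lemma emRatio_pos (hS : ∀ i, 0 < ∑ k ∈ A i, p k) {i : ι} {j : α} (hj : j ∈ A i) :
    0 < emRatio A p j := by
  have : Nonempty ι := ⟨i⟩
  refine mul_pos (by positivity) (sum_pos' (fun i' _ => ?_) ⟨i, mem_univ i, ?_⟩)
  · split_ifs
    exacts [inv_nonneg.2 (hS i').le, le_rfl]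
  · simpa [hj] using hS i

lemma sum_mul_emRatio [Fintype α] (g : α → ℝ) :
    ∑ j, g j * emRatio A p j =
      (Fintype.card ι : ℝ)⁻¹ * ∑ i, (∑ j ∈ A i, g j) / ∑ k ∈ A i, p k := by
  simp only [emRatio, mul_sum, sum_div, mul_ite, mul_zero]
  rw [sum_comm]
  refine sum_congr rfl fun i _ => ?_
  rw [← sum_filter, filter_mem_eq_inter, univ_inter]
  refine sum_congr rfl fun j _ => by ring

lemma sum_mul_emRatio_self [Fintype α] [Nonempty ι] (hS : ∀ i, ∑ k ∈ A i, p k ≠ 0) :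
    ∑ j, p j * emRatio A p j = 1 := by
  rw [sum_mul_emRatio]
  simp only [div_self (hS _), sum_const, card_univ, nsmul_eq_mul, mul_one]
  exact inv_mul_cancel₀ (by positivity)

lemma sum_log_le_sum_log_mul_emRatio [Fintype α] [Nonempty ι] (hp : ∀ j, 0 ≤ p j)
    (hsum : ∑ j, p j ≤ 1) (hS : ∀ i, 0 < ∑ k ∈ A i, p k) :
    ∑ i, log (∑ j ∈ A i, p j) ≤ ∑ i, log (∑ j ∈ A i, p j * emRatio A p j) := by
  have hr := emRatio_nonneg (A := A) fun i => (hS i).le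
  have hS' : ∀ i, 0 < ∑ j ∈ A i, p j * emRatio A p j := fun i => by
    obtain ⟨j, hj, hpj⟩ := exists_ne_zero_of_sum_ne_zero (hS i).ne'
    exact sum_pos' (fun k _ => mul_nonneg (hp k) (hr k))
      ⟨j, hj, mul_pos ((hp j).lt_of_ne' hpj) (emRatio_pos hS hj)⟩
  have hKL : 0 ≤ (Fintype.card ι : ℝ)⁻¹ *
      ∑ i, log ((∑ j ∈ A i, p j * emRatio A p j) / ∑ j ∈ A i, p j) :=
    calc 0 ≤ ∑ j, p j * emRatio A p j * log (emRatio A p j) :=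
          sum_mul_mul_log_nonneg hp hr (by rwa [sum_mul_emRatio_self fun i => (hS i).ne'])
      _ = (Fintype.card ι : ℝ)⁻¹ *
            ∑ i, (∑ j ∈ A i, p j * log (emRatio A p j)) / ∑ k ∈ A i, p k := by
          rw [← sum_mul_emRatio]
          exact sum_congr rfl fun j _ => by ring
      _ ≤ _ := by
          gcongr with i
          exact sum_mul_log_div_le_log_sum_mul_div (fun j _ => hp j) (hS i)
            fun j hj => emRatio_pos hS hj
  rw [← sub_nonneg, ← sum_sub_distrib]
  simpa only [log_div (hS' _).ne' (hS _).ne'] using nonneg_of_mul_nonneg_right hKL (by positivity)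

end EMStep

theorem em_step_increases_loglik_general
    (m n : ℕ) (hn : 0 < n)
    (A : Fin n → Finset (Fin m))
    (ℓ : (Fin m → ℝ) → ℝ)
    (hℓ : ∀ q : Fin m → ℝ, ℓ q = (1 / (n : ℝ)) * ∑ i, Real.log (∑ j ∈ A i, q j))
    (p : Fin m → ℝ) (hp : ∀ j, 0 ≤ p j) (hsum : ∑ j, p j = 1)
    (hpos : ∀ i, 0 < ∑ k ∈ A i, p k)
    (p' : Fin m → ℝ)
    (hp' : ∀ j, p' j =
      p j * ((1 / (n : ℝ)) * ∑ i, (if j ∈ A i then (∑ k ∈ A i, p k)⁻¹ else 0))) :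
    ℓ p ≤ ℓ p' := by
  have : Nonempty (Fin n) := Fin.pos_iff_nonempty.mp hn
  obtain rfl : p' = fun j => p j * emRatio A p j :=
    funext fun j => by simp only [hp' j, emRatio, Fintype.card_fin, one_div]
  rw [hℓ, hℓ]
  exact mul_le_mul_of_nonneg_left (sum_log_le_sum_log_mul_emRatio hp hsum.le hpos) (by positivity)

/-- One EM step does not decrease the mixture log-likelihood
`ℓ(p) = (1/n) ∑ᵢ log (∑_{j ∈ Aᵢ} p_j)`. -/
theorem em_step_increases_loglik
    (m n : ℕ) (hm : 0 < m) (hn : 0 < n)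
    (A : Fin n → Finset (Fin m)) (hA : ∀ i, (A i).Nonempty)
    (ℓ : (Fin m → ℝ) → ℝ)
    (hℓ : ∀ q : Fin m → ℝ, ℓ q = (1 / (n : ℝ)) * ∑ i, Real.log (∑ j ∈ A i, q j))
    (p : Fin m → ℝ) (hp : ∀ j, 0 ≤ p j) (hsum : ∑ j, p j = 1)
    (hpos : ∀ i, 0 < ∑ k ∈ A i, p k)
    (p' : Fin m → ℝ)
    (hp' : ∀ j, p' j =
      p j * ((1 / (n : ℝ)) * ∑ i, (if j ∈ A i then (∑ k ∈ A i, p k)⁻¹ else 0))) :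
    ℓ p ≤ ℓ p' :=
  em_step_increases_loglik_general m n hn A ℓ hℓ p hp hsum hpos p' hp'
end
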